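/- arXiv:1708.02656 — 4 statements merged into one kernel-verified Lean document; each statement's English description precedes it below -/
import Mathlib

section
/- Let k be an algebraically closed field, let G be a group, and let H be a normal subgroup of G. Let ρ : G → GL(V) and ρ′ : G → GL(V′) be representations of G on finite-dimensional k-vector spaces V and V′ of the same dimension n, and suppose det(ρ(g)) = det(ρ′(g)) for all g ∈ G. Suppose that the restrictions ρ|_H and ρ′|_H are irreducible and isomorphic as representations of H. Then there exists a subgroup G′ of G of finite index (in fact of index dividing n) such that ρ|_{G′} and ρ′|_{G′} are isomorphic as representations of G′. -/
/-!
Transport `ρ'` to `V` along an `H`-isomorphism `f`, obtaining `σ` with `σ|_H = ρ|_H`. For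
every `g`, normality of `H` makes `σ g * ρ g⁻¹` commute with `ρ(H)`, so by Schur's lemma
`σ g = χ g • ρ g` for a character `χ : G →* kˣ`. Comparing determinants gives `χ g ^ n = 1`,
so the image of `χ` is a finite, hence cyclic, group of exponent dividing `n`, and `f` is
equivariant for `G' = ker χ`.
-/

namespace Representation

variable {k G V : Type*} [Field k] [AddCommGroup V] [Module k V]

theorem exists_eq_smul_one_of_commute [IsAlgClosed k] [FiniteDimensional k V] [Nontrivial V]
    [Monoid G] (S : Set G) (ρ : Representation k G V)
    (hirr : ∀ W : Submodule k V, (∀ s ∈ S, ∀ v ∈ W, ρ s v ∈ W) → W = ⊥ ∨ W = ⊤)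
    (B : Module.End k V) (hB : ∀ s ∈ S, Commute B (ρ s)) :
    ∃ c : k, B = c • 1 := by
  obtain ⟨c, hc⟩ := Module.End.exists_eigenvalue B
  have hinv : ∀ s ∈ S, ∀ v ∈ B.eigenspace c, ρ s v ∈ B.eigenspace c := by
    intro s hs v hv
    rw [Module.End.mem_eigenspace_iff] at hv ⊢
    rw [← Module.End.mul_apply, (hB s hs).eq, Module.End.mul_apply, hv, map_smul]
  refine ⟨c, LinearMap.ext fun v => ?_⟩
  have hv : v ∈ B.eigenspace c := ((hirr _ hinv).resolve_left hc).symm ▸ Submodule.mem_top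
  simpa using Module.End.mem_eigenspace_iff.mp hv

variable [Group G]

theorem commute_mul_map_inv_of_eqOn_normal (H : Subgroup G) [H.Normal]
    (ρ σ : Representation k G V) (hσ : ∀ h ∈ H, σ h = ρ h) (g : G) :
    ∀ h ∈ H, Commute (σ g * ρ g⁻¹) (ρ h) := by
  intro h hh
  have hconj : g⁻¹ * h * g ∈ H := by simpa using Subgroup.Normal.conj_mem ‹_› h hh g⁻¹
  calc σ g * ρ g⁻¹ * ρ h = σ g * ρ (g⁻¹ * h * g) * ρ g⁻¹ := by
        rw [mul_assoc, mul_assoc, ← map_mul, ← map_mul, mul_inv_cancel_right]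
    _ = σ g * σ (g⁻¹ * h * g) * ρ g⁻¹ := by rw [hσ _ hconj]
    _ = σ h * (σ g * ρ g⁻¹) := by
        rw [← map_mul, ← mul_assoc, mul_inv_cancel_left, map_mul, mul_assoc]
    _ = ρ h * (σ g * ρ g⁻¹) := by rw [hσ h hh]

theorem exists_eq_smul_of_eqOn_normal [IsAlgClosed k] [FiniteDimensional k V] [Nontrivial V]
    (H : Subgroup G) [H.Normal] (ρ σ : Representation k G V)
    (hirr : ∀ W : Submodule k V, (∀ h ∈ H, ∀ v ∈ W, ρ h v ∈ W) → W = ⊥ ∨ W = ⊤)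
    (hσ : ∀ h ∈ H, σ h = ρ h) (g : G) :
    ∃ c : k, σ g = c • ρ g := by
  obtain ⟨c, hc⟩ := exists_eq_smul_one_of_commute (H : Set G) ρ hirr _
    (commute_mul_map_inv_of_eqOn_normal H ρ σ hσ g)
  refine ⟨c, ?_⟩
  calc σ g = σ g * ρ g⁻¹ * ρ g := by
        rw [mul_assoc, ← map_mul, inv_mul_cancel, map_one, mul_one]
    _ = c • ρ g := by rw [hc, smul_one_mul]

theorem apply_ne_zero [Nontrivial V] (ρ : Representation k G V) (g : G) : ρ g ≠ 0 :=
  fun h => one_ne_zero <| by rw [← map_one ρ, ← mul_inv_cancel g, map_mul, h, zero_mul]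

theorem exists_monoidHom_eq_smul [Nontrivial V] (ρ σ : Representation k G V)
    (h : ∀ g, ∃ c : k, σ g = c • ρ g) :
    ∃ χ : G →* kˣ, ∀ g, σ g = (χ g : k) • ρ g := by
  choose c hc using h
  have hinj (g : G) : Function.Injective fun a : k => a • ρ g :=
    smul_left_injective k (ρ.apply_ne_zero g)
  let χ : G →* k :=
    { toFun := c
      map_one' := hinj 1 <| by
        change c 1 • ρ 1 = (1 : k) • ρ 1
        rw [← hc, map_one, map_one, one_smul]
      map_mul' := fun g g' => hinj (g * g') <| by
        change c (g * g') • ρ (g * g') = (c g * c g') • ρ (g * g')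
        rw [← hc, map_mul, map_mul, hc, hc, smul_mul_smul_comm] }
  exact ⟨χ.toHomUnits, fun g => by simp [hc, χ]⟩

theorem pow_finrank_eq_one_of_det_smul_eq [FiniteDimensional k V] (ρ : Representation k G V)
    {g : G} {c : k} (h : LinearMap.det (c • ρ g) = LinearMap.det (ρ g)) :
    c ^ Module.finrank k V = 1 := by
  have hdet : LinearMap.det (ρ g) * LinearMap.det (ρ g⁻¹) = 1 := by
    rw [← map_mul, ← map_mul, mul_inv_cancel, map_one, map_one]
  rwa [LinearMap.det_smul, mul_eq_right₀ (left_ne_zero_of_mul_eq_one hdet)] at h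

end Representation

theorem MonoidHom.index_ker_dvd_of_forall_pow_eq_one {G K : Type*} [Group G] [CommRing K]
    [IsDomain K]
    (χ : G →* Kˣ) {n : ℕ} [NeZero n] (h : ∀ g, χ g ^ n = 1) : χ.ker.index ∣ n := by
  have hle : χ.range ≤ rootsOfUnity n K := by
    rintro _ ⟨g, rfl⟩
    exact (mem_rootsOfUnity n _).mpr (h g)
  have : Finite χ.range := Finite.of_injective _ (Subgroup.inclusion_injective hle)
  rw [Subgroup.index_ker, ← IsCyclic.exponent_eq_card]
  exact Monoid.exponent_dvd_of_forall_pow_eq_one fun x => Subtype.ext (hle x.2)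

theorem rank_two_twist_descent_general
    {k : Type*} [Field k] [IsAlgClosed k]
    {G : Type*} [Group G] (H : Subgroup G) [H.Normal]
    {V V' : Type*} [AddCommGroup V] [Module k V] [AddCommGroup V'] [Module k V']
    [FiniteDimensional k V]
    (n : ℕ)
    (hdimV : Module.finrank k V = n)
    (ρ : Representation k G V) (ρ' : Representation k G V')
    (hdet : ∀ g : G, LinearMap.det (ρ g) = LinearMap.det (ρ' g))
    (hirrH : Nontrivial V ∧
      ∀ W : Submodule k V, (∀ h ∈ H, ∀ v ∈ W, ρ h v ∈ W) → W = ⊥ ∨ W = ⊤)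
    (hisoH : ∃ f : V ≃ₗ[k] V', ∀ h ∈ H, ∀ v : V, f (ρ h v) = ρ' h (f v)) :
    ∃ G' : Subgroup G, G'.index ≠ 0 ∧ G'.index ∣ n ∧
      ∃ f : V ≃ₗ[k] V', ∀ g ∈ G', ∀ v : V, f (ρ g v) = ρ' g (f v) := by
  obtain ⟨hV, hirr⟩ := hirrH
  obtain ⟨f, hf⟩ := hisoH
  have : NeZero n := ⟨hdimV ▸ Module.finrank_pos.ne'⟩
  let σ : Representation k G V := (f.symm.conjAlgEquiv k).toMonoidHom.comp ρ'
  have hσ (g : G) (v : V) : σ g v = f.symm (ρ' g (f v)) := rfl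
  have hσH (h : G) (hh : h ∈ H) : σ h = ρ h := LinearMap.ext fun v => by
    rw [hσ, ← hf h hh, LinearEquiv.symm_apply_apply]
  obtain ⟨χ, hχ⟩ :=
    ρ.exists_monoidHom_eq_smul σ (ρ.exists_eq_smul_of_eqOn_normal H σ hirr hσH)
  have hχn (g : G) : χ g ^ n = 1 := by
    have hdetσ : LinearMap.det (σ g) = LinearMap.det (ρ g) := by
      rw [hdet]; exact LinearMap.det_conj (ρ' g) f.symm
    rw [hχ] at hdetσ
    refine Units.ext ?_
    rw [Units.val_pow_eq_pow_val, Units.val_one, ← hdimV]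
    exact ρ.pow_finrank_eq_one_of_det_smul_eq hdetσ
  have hdvd := χ.index_ker_dvd_of_forall_pow_eq_one hχn
  refine ⟨χ.ker, ne_zero_of_dvd_ne_zero (NeZero.ne n) hdvd, hdvd, f, fun g hg v => ?_⟩
  have hσg : σ g = ρ g := by rw [hχ, χ.mem_ker.mp hg, Units.val_one, one_smul]
  rw [← hσg, hσ, LinearEquiv.apply_symm_apply]

/-- **Lemma 2.6 (Lemma `lemma:rep`).**
Let `k` be an algebraically closed field, `G` a group, `H` a normal subgroup of `G`.
Let `ρ : G → GL(V)` and `ρ' : G → GL(V')` be representations on finite-dimensional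
`k`-vector spaces of the same dimension `n` with equal determinants.  If the
restrictions `ρ|_H` and `ρ'|_H` are irreducible and isomorphic as representations
of `H`, then there is a subgroup `G'` of `G` of finite index (in fact of index
dividing `n`) such that `ρ|_{G'}` and `ρ'|_{G'}` are isomorphic. -/
theorem rank_two_twist_descent
    {k : Type*} [Field k] [IsAlgClosed k]
    {G : Type*} [Group G] (H : Subgroup G) [H.Normal]
    {V V' : Type*} [AddCommGroup V] [Module k V] [AddCommGroup V'] [Module k V']
    [FiniteDimensional k V] [FiniteDimensional k V']
    (n : ℕ)
    (hdimV : Module.finrank k V = n) (hdimV' : Module.finrank k V' = n)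
    (ρ : Representation k G V) (ρ' : Representation k G V')
    (hdet : ∀ g : G, LinearMap.det (ρ g) = LinearMap.det (ρ' g))
    (hirrH : Nontrivial V ∧
      ∀ W : Submodule k V, (∀ h ∈ H, ∀ v ∈ W, ρ h v ∈ W) → W = ⊥ ∨ W = ⊤)
    (hirrH' : Nontrivial V' ∧
      ∀ W : Submodule k V', (∀ h ∈ H, ∀ v ∈ W, ρ' h v ∈ W) → W = ⊥ ∨ W = ⊤)
    (hisoH : ∃ f : V ≃ₗ[k] V', ∀ h ∈ H, ∀ v : V, f (ρ h v) = ρ' h (f v)) :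
    ∃ G' : Subgroup G, G'.index ≠ 0 ∧ G'.index ∣ n ∧
      ∃ f : V ≃ₗ[k] V', ∀ g ∈ G', ∀ v : V, f (ρ g v) = ρ' g (f v) :=
  rank_two_twist_descent_general H n hdimV ρ ρ' hdet hirrH hisoH
end

section
/- Let k be an algebraically closed field, let G be a group, and let H be a normal subgroup of G. Let ρ : G → GL(V) and ρ′ : G → GL(V′) be representations of G on finite-dimensional k-vector spaces of the same dimension n, and suppose that the restrictions ρ|_H and ρ′|_H are irreducible and isomorphic as representations of H. Then there exists a group homomorphism χ : G → kˣ that is trivial on H such that ρ′ is isomorphic, as a representation of G, to the twist χ ⊗ ρ (the representation g ↦ χ(g)·ρ(g)). Moreover, if additionally det(ρ(g)) = det(ρ′(g)) for all g ∈ G, then χ(g)ⁿ = 1 for all g ∈ G. -/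
/-!
Transport `ρ'` along the `H`-isomorphism `f` to a representation `σ` on `V` agreeing with `ρ`
on `H`. For each `g`, normality of `H` makes `σ g ∘ ρ(g)⁻¹` commute with `ρ(H)`, so by Schur's
lemma it is a scalar `χ g`; uniqueness of these scalars makes `χ` a character trivial on `H`.
Taking determinants of `σ g = χ g • ρ g` gives `χ(g)ⁿ = 1` when the determinants agree.
-/

namespace Representation

variable {k G V : Type*} [Field k] [Group G] [AddCommGroup V] [Module k V]

def IsIrreducibleOn (ρ : Representation k G V) (H : Subgroup G) : Prop :=
  Nontrivial V ∧ ∀ W : Submodule k V, (∀ h ∈ H, ∀ v ∈ W, ρ h v ∈ W) → W = ⊥ ∨ W = ⊤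

/-- Schur's lemma: an eigenspace of an endomorphism commuting with `ρ H` is `ρ H`-invariant. -/
theorem IsIrreducibleOn.exists_eq_smul_one_of_commute [IsAlgClosed k] [FiniteDimensional k V]
    {ρ : Representation k G V} {H : Subgroup G} (hρ : ρ.IsIrreducibleOn H) (A : Module.End k V)
    (hA : ∀ h ∈ H, Commute A (ρ h)) : ∃ c : k, A = c • 1 := by
  have := hρ.1
  obtain ⟨c, hc⟩ := Module.End.exists_eigenvalue A
  refine ⟨c, ?_⟩
  have hinv : ∀ h ∈ H, ∀ v ∈ A.eigenspace c, ρ h v ∈ A.eigenspace c := by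
    intro h hh v hv
    rw [Module.End.mem_eigenspace_iff] at hv ⊢
    rw [← Module.End.mul_apply, (hA h hh).eq, Module.End.mul_apply, hv, map_smul]
  rcases hρ.2 _ hinv with hbot | htop
  · exact absurd hbot hc
  · ext v
    exact Module.End.mem_eigenspace_iff.mp (htop ▸ Submodule.mem_top)

theorem smul_left_injective_apply [Nontrivial V] (ρ : Representation k G V) (g : G) :
    Function.Injective fun c : k ↦ c • ρ g := by
  intro c d hcd
  have : c • (1 : Module.End k V) = d • 1 := by
    simpa [smul_mul_assoc, ← map_mul] using congrArg (· * ρ g⁻¹) hcd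
  exact smul_left_injective k one_ne_zero this

theorem IsIrreducibleOn.exists_eq_smul_of_eqOn [IsAlgClosed k] [FiniteDimensional k V]
    {ρ σ : Representation k G V} {H : Subgroup G} [H.Normal] (hρ : ρ.IsIrreducibleOn H)
    (hσ : ∀ h ∈ H, σ h = ρ h) :
    ∃ χ : G →* kˣ, (∀ h ∈ H, χ h = 1) ∧ ∀ g, σ g = (χ g : k) • ρ g := by
  have := hρ.1
  have hscalar : ∀ g, ∃ c : k, σ g = c • ρ g := by
    intro g
    have hcomm : ∀ h ∈ H, Commute (σ g * ρ g⁻¹) (ρ h) := by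
      intro h hh
      have hconj : g⁻¹ * h * g ∈ H := Subgroup.Normal.conj_mem' ‹_› h hh g
      calc σ g * ρ g⁻¹ * ρ h = σ g * ρ (g⁻¹ * h * g * g⁻¹) := by
            rw [mul_assoc, ← map_mul, mul_inv_cancel_right]
        _ = σ (g * (g⁻¹ * h * g)) * ρ g⁻¹ := by
            rw [map_mul ρ, map_mul σ, ← hσ _ hconj, ← mul_assoc]
        _ = ρ h * (σ g * ρ g⁻¹) := by
            rw [show g * (g⁻¹ * h * g) = h * g by group, map_mul, hσ h hh, mul_assoc]
    obtain ⟨c, hc⟩ := hρ.exists_eq_smul_one_of_commute _ hcomm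
    refine ⟨c, ?_⟩
    calc σ g = σ g * ρ g⁻¹ * ρ g := by rw [mul_assoc, ← map_mul, inv_mul_cancel, map_one, mul_one]
      _ = c • ρ g := by rw [hc, smul_one_mul]
  choose c hc using hscalar
  have hc_mul : ∀ g₁ g₂, c (g₁ * g₂) = c g₁ * c g₂ := by
    intro g₁ g₂
    apply smul_left_injective_apply ρ (g₁ * g₂)
    change c (g₁ * g₂) • ρ (g₁ * g₂) = (c g₁ * c g₂) • ρ (g₁ * g₂)
    rw [← hc, map_mul, map_mul, hc g₁, hc g₂, smul_mul_smul_comm]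
  have hc_one : c 1 = 1 := by
    apply smul_left_injective_apply ρ 1
    change c 1 • ρ 1 = (1 : k) • ρ 1
    rw [← hc, map_one, map_one, one_smul]
  let χ : G →* k := ⟨⟨c, hc_one⟩, hc_mul⟩
  refine ⟨χ.toHomUnits, fun h hh ↦ Units.ext ?_, hc⟩
  apply smul_left_injective_apply ρ h
  change c h • ρ h = (1 : k) • ρ h
  rw [← hc, hσ h hh, one_smul]

end Representation

theorem LinearMap.pow_finrank_eq_one_of_det_smul_eq {k V : Type*} [Field k] [AddCommGroup V]
    [Module k V] {c : k} {T : Module.End k V} (hT : LinearMap.det T ≠ 0)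
    (h : LinearMap.det (c • T) = LinearMap.det T) : c ^ Module.finrank k V = 1 := by
  rwa [LinearMap.det_smul, mul_eq_right₀ hT] at h

theorem twist_of_restriction_isomorphic_general
    {k : Type*} [Field k] [IsAlgClosed k]
    {G : Type*} [Group G] (H : Subgroup G) [H.Normal]
    {V V' : Type*} [AddCommGroup V] [Module k V] [AddCommGroup V'] [Module k V']
    [FiniteDimensional k V]
    (n : ℕ)
    (hdimV : Module.finrank k V = n)
    (ρ : Representation k G V) (ρ' : Representation k G V')
    (hirrH : Nontrivial V ∧
      ∀ W : Submodule k V, (∀ h ∈ H, ∀ v ∈ W, ρ h v ∈ W) → W = ⊥ ∨ W = ⊤)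
    (hisoH : ∃ f : V ≃ₗ[k] V', ∀ h ∈ H, ∀ v : V, f (ρ h v) = ρ' h (f v)) :
    ∃ χ : G →* kˣ, (∀ h ∈ H, χ h = 1) ∧
      (∃ f : V ≃ₗ[k] V', ∀ g : G, ∀ v : V, f ((χ g : k) • ρ g v) = ρ' g (f v)) ∧
      ((∀ g : G, LinearMap.det (ρ g) = LinearMap.det (ρ' g)) →
        ∀ g : G, (χ g) ^ n = 1) := by
  obtain ⟨f, hf⟩ := hisoH
  let σ : Representation k G V := f.symm.conjRingEquiv.toMonoidHom.comp ρ'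
  have hσ : ∀ h ∈ H, σ h = ρ h := fun h hh ↦
    LinearMap.ext fun v ↦ f.symm_apply_eq.mpr (hf h hh v).symm
  obtain ⟨χ, hχH, hχ⟩ := Representation.IsIrreducibleOn.exists_eq_smul_of_eqOn hirrH hσ
  refine ⟨χ, hχH, ⟨f, fun g v ↦ ?_⟩, fun hdet g ↦ Units.ext ?_⟩
  · rw [← LinearMap.smul_apply, ← hχ]
    exact f.apply_symm_apply _
  · rw [Units.val_pow_eq_pow_val, Units.val_one, ← hdimV]
    refine LinearMap.pow_finrank_eq_one_of_det_smul_eq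
      (((Group.isUnit g).map ρ).map LinearMap.det).ne_zero ?_
    rw [← hχ, hdet]
    exact LinearMap.det_conj (ρ' g) f.symm

/-- Let `k` be an algebraically closed field, `G` a group, `H` a normal subgroup of `G`.
Let `ρ : G → GL(V)` and `ρ' : G → GL(V')` be representations on finite-dimensional
`k`-vector spaces of the same dimension `n` whose restrictions to `H` are irreducible
and isomorphic.  Then there is a character `χ : G → kˣ`, trivial on `H`, such that
`ρ'` is isomorphic to the twist `χ ⊗ ρ` as a representation of `G`.  Moreover, if the
determinants of `ρ` and `ρ'` agree, then `χ(g)ⁿ = 1` for all `g`. -/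
theorem twist_of_restriction_isomorphic
    {k : Type*} [Field k] [IsAlgClosed k]
    {G : Type*} [Group G] (H : Subgroup G) [H.Normal]
    {V V' : Type*} [AddCommGroup V] [Module k V] [AddCommGroup V'] [Module k V']
    [FiniteDimensional k V] [FiniteDimensional k V']
    (n : ℕ)
    (hdimV : Module.finrank k V = n) (hdimV' : Module.finrank k V' = n)
    (ρ : Representation k G V) (ρ' : Representation k G V')
    (hirrH : Nontrivial V ∧
      ∀ W : Submodule k V, (∀ h ∈ H, ∀ v ∈ W, ρ h v ∈ W) → W = ⊥ ∨ W = ⊤)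
    (hirrH' : Nontrivial V' ∧
      ∀ W : Submodule k V', (∀ h ∈ H, ∀ v ∈ W, ρ' h v ∈ W) → W = ⊥ ∨ W = ⊤)
    (hisoH : ∃ f : V ≃ₗ[k] V', ∀ h ∈ H, ∀ v : V, f (ρ h v) = ρ' h (f v)) :
    ∃ χ : G →* kˣ, (∀ h ∈ H, χ h = 1) ∧
      (∃ f : V ≃ₗ[k] V', ∀ g : G, ∀ v : V, f ((χ g : k) • ρ g v) = ρ' g (f v)) ∧
      ((∀ g : G, LinearMap.det (ρ g) = LinearMap.det (ρ' g)) →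
        ∀ g : G, (χ g) ^ n = 1) :=
  twist_of_restriction_isomorphic_general H n hdimV ρ ρ' hirrH hisoH
end

section
/- Let K be an algebraically closed field (for instance the algebraic closure of the ℓ-adic numbers ℚ_ℓ). Let G be a group, H a normal subgroup of G, and ρ : G → GL₂(K) a representation on the two-dimensional space V = K² that is irreducible (the only G-invariant subspaces of V are 0 and V). Assume there exists an element h ∈ H such that ρ(h) is a non-trivial unipotent element, i.e. ρ(h) ≠ 1 and (ρ(h) − 1)² = 0. Then the restriction ρ|_H is irreducible, i.e. the only H-invariant subspaces of V are 0 and V. -/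
/-!
A nontrivial unipotent `u = ρ h` of the plane leaves exactly one line invariant, namely
`ker (u - 1)`: a `u`-stable line is stable under the square-zero map `u - 1`, which must
therefore kill it. Hence a nonzero proper `H`-invariant subspace `W` is this line. As `H` is
normal, each `ρ g` maps `W` to another `H`-invariant line, which must again be `W`; so `W` is
`G`-invariant, contradicting the irreducibility of `ρ`.
-/

open Module LinearMap

section LinearAlgebra

variable {K V : Type*} [Field K] [AddCommGroup V] [Module K V]

theorem Submodule.finrank_eq_one_of_ne_bot_of_ne_top (hV : finrank K V = 2)
    {W : Submodule K V} (hbot : W ≠ ⊥) (htop : W ≠ ⊤) : finrank K W = 1 := by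
  have : FiniteDimensional K V := Module.finite_of_finrank_eq_succ hV
  have hpos : finrank K W ≠ 0 := fun h => hbot (Submodule.finrank_eq_zero.mp h)
  have hlt : finrank K W < 2 := hV ▸ Submodule.finrank_lt htop
  omega

theorem Submodule.le_ker_of_sq_eq_zero {f : Module.End K V} (hf : f ^ 2 = 0)
    {W : Submodule K V} (hW : finrank K W = 1) (hfW : ∀ v ∈ W, f v ∈ W) : W ≤ ker f := by
  intro v hv
  by_contra hfv
  -- `f v` spans the line `W`, so `v = c • f v` and `f v = c • f (f v) = 0`
  obtain ⟨c, hc⟩ := (finrank_eq_one_iff_of_nonzero' (⟨f v, hfW v hv⟩ : W)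
    (fun h => hfv (congrArg Subtype.val h))).mp hW ⟨v, hv⟩
  have hv' : c • f v = v := congrArg Subtype.val hc
  apply hfv
  rw [mem_ker, ← hv', map_smul, ← Module.End.mul_apply, ← sq, hf, LinearMap.zero_apply,
    smul_zero]

theorem LinearMap.finrank_ker_eq_one_of_sq_eq_zero (hV : finrank K V = 2) {f : Module.End K V}
    (hf0 : f ≠ 0) (hf : f ^ 2 = 0) : finrank K (ker f) = 1 := by
  have : FiniteDimensional K V := Module.finite_of_finrank_eq_succ hV
  have hrange : range f ≤ ker f := by
    rintro _ ⟨v, rfl⟩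
    rw [mem_ker, ← Module.End.mul_apply, ← sq, hf, LinearMap.zero_apply]
  have hle := Submodule.finrank_mono hrange
  have hpos : finrank K (range f) ≠ 0 := fun h =>
    hf0 (range_eq_bot.mp (Submodule.finrank_eq_zero.mp h))
  have := finrank_range_add_finrank_ker f
  omega

theorem Submodule.eq_ker_of_sq_eq_zero (hV : finrank K V = 2) {f : Module.End K V}
    (hf0 : f ≠ 0) (hf : f ^ 2 = 0) {W : Submodule K V} (hW : finrank K W = 1)
    (hfW : ∀ v ∈ W, f v ∈ W) : W = ker f :=
  have : FiniteDimensional K V := Module.finite_of_finrank_eq_succ hV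
  Submodule.eq_of_le_of_finrank_eq (le_ker_of_sq_eq_zero hf hW hfW)
    (by rw [hW, finrank_ker_eq_one_of_sq_eq_zero hV hf0 hf])

end LinearAlgebra

namespace Representation

variable {K G V : Type*} [CommRing K] [Group G] [AddCommGroup V] [Module K V]
  (σ : Representation K G V) {H : Subgroup G}

theorem map_invariant_of_normal [H.Normal] {W : Submodule K V}
    (hW : ∀ k ∈ H, ∀ v ∈ W, σ k v ∈ W) (g : G) :
    ∀ k ∈ H, ∀ v ∈ W.map (σ g), σ k v ∈ W.map (σ g) := by
  rintro k hk _ ⟨v, hv, rfl⟩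
  refine ⟨σ (g⁻¹ * k * g) v, hW _ ?_ v hv, ?_⟩
  · simpa using ‹H.Normal›.conj_mem k hk g⁻¹
  · simp only [← Module.End.mul_apply, ← map_mul]
    group

theorem invariant_of_unique_of_normal [H.Normal] {W : Submodule K V}
    (hW : ∀ k ∈ H, ∀ v ∈ W, σ k v ∈ W)
    (huniq : ∀ W' : Submodule K V, (∀ k ∈ H, ∀ v ∈ W', σ k v ∈ W') →
      finrank K W' = finrank K W → W' = W) :
    ∀ g : G, ∀ v ∈ W, σ g v ∈ W := by
  intro g v hv
  have hrank : finrank K (W.map (σ g)) = finrank K W :=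
    LinearEquiv.finrank_map_eq (GeneralLinearGroup.toLinearEquiv (σ.asGroupHom g)) W
  rw [← huniq _ (σ.map_invariant_of_normal hW g) hrank]
  exact Submodule.mem_map_of_mem hv

end Representation

theorem restriction_irreducible_of_unipotent_general
    {K : Type*} [Field K]
    {G : Type*} [Group G] (H : Subgroup G) [H.Normal]
    (ρ : G →* Matrix.GeneralLinearGroup (Fin 2) K)
    (hirr : ∀ W : Submodule K (Fin 2 → K),
      (∀ g : G, ∀ v ∈ W, (ρ g : Matrix (Fin 2) (Fin 2) K).mulVec v ∈ W) → W = ⊥ ∨ W = ⊤)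
    (h : G) (hh : h ∈ H)
    (hne : ρ h ≠ 1)
    (hunip : ((ρ h : Matrix (Fin 2) (Fin 2) K) - 1) ^ 2 = 0) :
    ∀ W : Submodule K (Fin 2 → K),
      (∀ g ∈ H, ∀ v ∈ W, (ρ g : Matrix (Fin 2) (Fin 2) K).mulVec v ∈ W) →
        W = ⊥ ∨ W = ⊤ := by
  -- `σ g v` unfolds to `(ρ g).mulVec v`, so invariance under `ρ` and under `σ` agree
  let σ : Representation K G (Fin 2 → K) :=
    (Matrix.toLinAlgEquiv' : Matrix (Fin 2) (Fin 2) K ≃ₐ[K] _).toMonoidHom.comp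
      ((Units.coeHom _).comp ρ)
  have hf : σ h - 1 = Matrix.toLinAlgEquiv' ((ρ h : Matrix (Fin 2) (Fin 2) K) - 1) := by
    simp [σ]
  have hf0 : σ h - 1 ≠ 0 := by
    rw [hf, map_ne_zero_iff _ Matrix.toLinAlgEquiv'.injective, sub_ne_zero]
    exact fun h1 => hne (Units.ext h1)
  have hf2 : (σ h - 1) ^ 2 = 0 := by rw [hf, ← map_pow, hunip, map_zero]
  have hV : finrank K (Fin 2 → K) = 2 := by simp
  have hline : ∀ W : Submodule K (Fin 2 → K), (∀ k ∈ H, ∀ v ∈ W, σ k v ∈ W) →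
      finrank K W = 1 → W = ker (σ h - 1) := fun W hW hW1 =>
    Submodule.eq_ker_of_sq_eq_zero hV hf0 hf2 hW1 fun v hv => W.sub_mem (hW h hh v hv) hv
  intro W hW
  by_contra hW'
  obtain ⟨hbot, htop⟩ := not_or.mp hW'
  have hW1 := Submodule.finrank_eq_one_of_ne_bot_of_ne_top hV hbot htop
  refine hW' (hirr W (σ.invariant_of_unique_of_normal hW fun W' hW' hrank => ?_))
  rw [hline W hW hW1, hline W' hW' (hrank.trans hW1)]

/-- **Lemma 2.7 (`stupid1`).**
Let `K` be an algebraically closed field, `G` a group, `H` a normal subgroup of `G`,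
and `ρ : G → GL₂(K)` an irreducible two-dimensional representation (acting on
`V = K²` by matrix multiplication).  If for some `h ∈ H` the matrix `ρ(h)` is a
non-trivial unipotent element, then the restriction `ρ|_H` is irreducible. -/
theorem restriction_irreducible_of_unipotent
    {K : Type*} [Field K] [IsAlgClosed K]
    {G : Type*} [Group G] (H : Subgroup G) [H.Normal]
    (ρ : G →* Matrix.GeneralLinearGroup (Fin 2) K)
    (hirr : ∀ W : Submodule K (Fin 2 → K),
      (∀ g : G, ∀ v ∈ W, (ρ g : Matrix (Fin 2) (Fin 2) K).mulVec v ∈ W) → W = ⊥ ∨ W = ⊤)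
    (h : G) (hh : h ∈ H)
    (hne : ρ h ≠ 1)
    (hunip : ((ρ h : Matrix (Fin 2) (Fin 2) K) - 1) ^ 2 = 0) :
    ∀ W : Submodule K (Fin 2 → K),
      (∀ g ∈ H, ∀ v ∈ W, (ρ g : Matrix (Fin 2) (Fin 2) K).mulVec v ∈ W) →
        W = ⊥ ∨ W = ⊤ :=
  restriction_irreducible_of_unipotent_general H ρ hirr h hh hne hunip
end

section
/- Fix a prime ℓ and n ≥ 1, and let K be the algebraic closure of ℚ_ℓ with its canonical (spectral) norm topology, so that the ring of integers ℤ_ℓ ⊆ ℚ_ℓ ⊆ K. Let G be a profinite group (a compact, totally disconnected topological group) and let ρ : G → GLₙ(K) be a continuous group homomorphism. Suppose there exists an open subgroup H of G such that: (i) for every h ∈ H, every matrix entry of ρ(h) lies in ℤ_ℓ (viewed inside K); and (ii) there exists m ≥ 0 such that every matrix A ∈ GLₙ(K) all of whose entries lie in ℤ_ℓ and which satisfies A ≡ 1 (mod ℓᵐ) (i.e. every entry of A − 1 lies in ℓᵐ·ℤ_ℓ) belongs to ρ(H). Suppose also that there is a dense subset S of G such that tr(ρ(s)) ∈ ℚ_ℓ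 for all s ∈ S. Then for every g ∈ G, every matrix entry of ρ(g) lies in ℚ_ℓ; that is, ρ(G) ⊆ GLₙ(ℚ_ℓ). -/
/-!
The image of `ℚ_ℓ` in `K` is a closed subfield, since the embedding is isometric and `ℚ_ℓ` is
complete; as `g ↦ tr ρ(g)` is continuous and takes values in it on a dense set, every trace
`tr ρ(g)` lies in `ℚ_ℓ`. The hypothesis on `H` puts the elementary matrix `A = 1 + ℓᵐ E_{ji}`
into `ρ(H)`, and `tr (ρ(g) A) = tr ρ(g) + ℓᵐ ρ(g)_{ij}` recovers each entry from two traces.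
-/

open Matrix

namespace Matrix

variable {n : Type*} [Fintype n] [DecidableEq n]

theorem det_one_add_single {R : Type*} [CommRing R] (i j : n) (c : R) :
    det (1 + single i j c) = 1 + (single i j c).trace := by
  have hrank_one : single i j c = vecMulVec (Pi.single i c) (Pi.single j 1) := by
    ext k l
    simp only [vecMulVec_apply, single_apply, Pi.single_apply, eq_comm]
    split_ifs <;> simp_all
  rw [hrank_one, vecMulVec_eq Unit, det_one_add_replicateCol_mul_replicateRow, ← vecMulVec_eq Unit,
    trace_vecMulVec, dotProduct_comm]

theorem trace_mul_one_add_single {R : Type*} [CommRing R] (X : Matrix n n R) (i j : n) (c : R) :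
    (X * (1 + single j i c)).trace = X.trace + c * X i j := by
  rw [Matrix.mul_add, Matrix.mul_one, trace_add, trace_mul_single, mul_comm]
  rfl

theorem det_one_add_single_ne_zero {K : Type*} [Field K] (i j : n) {c : K} (hc : 1 + c ≠ 0) :
    det (1 + single i j c) ≠ 0 := by
  rw [det_one_add_single]
  rcases eq_or_ne i j with rfl | hij
  · rwa [trace_single_eq_same]
  · simp [trace_single_eq_of_ne i j c hij]

theorem apply_mem_of_trace_mul_one_add_single_mem {K : Type*} [Field K] {F : Subfield K}
    {X : Matrix n n K} {i j : n} {c : K} (hc : c ∈ F) (hc₀ : c ≠ 0) (h₀ : X.trace ∈ F)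
    (h₁ : (X * (1 + single j i c)).trace ∈ F) : X i j ∈ F := by
  rw [trace_mul_one_add_single] at h₁
  have hdiff : c * X i j ∈ F := by simpa using F.sub_mem h₁ h₀
  simpa [hc₀] using F.mul_mem (F.inv_mem hc) hdiff

end Matrix

theorem isClosed_range_algebraMap_of_norm_eq {𝕜 A : Type*} [NormedField 𝕜] [CompleteSpace 𝕜]
    [NormedRing A] [Algebra 𝕜 A] (h : ∀ x : 𝕜, ‖algebraMap 𝕜 A x‖ = ‖x‖) :
    IsClosed (Set.range (algebraMap 𝕜 A)) :=
  (AddMonoidHomClass.isometry_of_norm _ h).isClosedEmbedding.isClosed_range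

section Padic

variable (ℓ : ℕ) [Fact ℓ.Prime] {K : Type*} [Field K] [Algebra ℚ_[ℓ] K] {n : Type*} [DecidableEq n]

theorem exists_padicInt_single_natCast_pow_apply (m : ℕ) (i j k l : n) :
    ∃ z : ℤ_[ℓ], single i j ((ℓ : K) ^ m) k l = algebraMap ℚ_[ℓ] K ((ℓ : ℚ_[ℓ]) ^ m * z) := by
  refine ⟨if i = k ∧ j = l then 1 else 0, ?_⟩
  rw [single_apply]
  split_ifs <;> simp

theorem exists_padicInt_one_add_single_natCast_pow_apply (m : ℕ) (i j k l : n) :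
    ∃ z : ℤ_[ℓ], (1 + single i j ((ℓ : K) ^ m)) k l = algebraMap ℚ_[ℓ] K z := by
  obtain ⟨z, hz⟩ := exists_padicInt_single_natCast_pow_apply ℓ (K := K) m i j k l
  refine ⟨(if k = l then 1 else 0) + ℓ ^ m * z, ?_⟩
  rw [Matrix.add_apply, hz, one_apply]
  split_ifs <;> simp

end Padic

theorem rational_entries_of_dense_rational_traces_general
    (ℓ : ℕ) [Fact ℓ.Prime] (n : ℕ)
    {K : Type*} [NormedField K] [Algebra ℚ_[ℓ] K]
    (hnorm : ∀ q : ℚ_[ℓ], ‖algebraMap ℚ_[ℓ] K q‖ = ‖q‖)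
    {G : Type*} [Group G] [TopologicalSpace G]
    (ρ : G →* Matrix.GeneralLinearGroup (Fin n) K)
    (hρ : Continuous ρ)
    (H : Subgroup G)
    (hfull : ∃ m : ℕ, ∀ A : Matrix.GeneralLinearGroup (Fin n) K,
      (∀ i j : Fin n, ∃ z : ℤ_[ℓ],
        (A : Matrix (Fin n) (Fin n) K) i j = algebraMap ℚ_[ℓ] K (z : ℚ_[ℓ])) →
      (∀ i j : Fin n, ∃ z : ℤ_[ℓ],
        ((A : Matrix (Fin n) (Fin n) K) - 1) i j
          = algebraMap ℚ_[ℓ] K ((ℓ : ℚ_[ℓ]) ^ m * (z : ℚ_[ℓ]))) →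
      ∃ h ∈ H, ρ h = A)
    (S : Set G) (hS : Dense S)
    (htr : ∀ s ∈ S, ∃ q : ℚ_[ℓ],
      Matrix.trace (ρ s : Matrix (Fin n) (Fin n) K) = algebraMap ℚ_[ℓ] K q) :
    ∀ g : G, ∀ i j : Fin n, ∃ q : ℚ_[ℓ],
      (ρ g : Matrix (Fin n) (Fin n) K) i j = algebraMap ℚ_[ℓ] K q := by
  obtain ⟨m, hfull⟩ := hfull
  have : CharZero K := charZero_of_injective_algebraMap (algebraMap ℚ_[ℓ] K).injective
  set F := (algebraMap ℚ_[ℓ] K).fieldRange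
  have hF : IsClosed (F : Set K) := by
    rw [RingHom.coe_fieldRange]
    exact isClosed_range_algebraMap_of_norm_eq hnorm
  have htrace (g : G) : (ρ g : Matrix (Fin n) (Fin n) K).trace ∈ F :=
    hS.induction (fun s hs ↦ (htr s hs).imp fun _ ↦ Eq.symm)
      (hF.preimage (Units.continuous_val.comp hρ).matrix_trace) g
  intro g i j
  have hc : 1 + (ℓ : K) ^ m ≠ 0 := by exact_mod_cast (by positivity : 1 + ℓ ^ m ≠ 0)
  obtain ⟨h, -, hh⟩ :=
    hfull (.mkOfDetNeZero (1 + single j i ((ℓ : K) ^ m)) (det_one_add_single_ne_zero j i hc))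
    (exists_padicInt_one_add_single_natCast_pow_apply ℓ m j i)
    (by simpa using exists_padicInt_single_natCast_pow_apply ℓ (K := K) m j i)
  have hentry : (ρ g : Matrix (Fin n) (Fin n) K) i j ∈ F :=
    apply_mem_of_trace_mul_one_add_single_mem (pow_mem (natCast_mem F ℓ) m)
      (pow_ne_zero m (Nat.cast_ne_zero.2 (Fact.out : ℓ.Prime).ne_zero)) (htrace g)
      (by simpa [hh] using htrace (g * h))
  obtain ⟨q, hq⟩ := hentry
  exact ⟨q, hq.symm⟩

/-- **Lemma 3.2 (`ratlrep`).**
Let `K` be the algebraic closure of `ℚ_ℓ`, equipped with the spectral norm (the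
unique norm extending the `ℓ`-adic absolute value).  Let `G` be a profinite group
and `ρ : G → GLₙ(K)` a continuous homomorphism.  Suppose there is an open subgroup
`H` of `G` such that `ρ(H)` has all matrix entries in `ℤ_ℓ` and contains all
matrices with entries in `ℤ_ℓ` congruent to `1` modulo `ℓᵐ` for some `m`.  If
there is a dense subset `S ⊆ G` with `tr(ρ(s)) ∈ ℚ_ℓ` for all `s ∈ S`, then all
matrix entries of `ρ(g)` lie in `ℚ_ℓ` for every `g ∈ G`, i.e. `ρ(G) ⊆ GLₙ(ℚ_ℓ)`. -/
theorem rational_entries_of_dense_rational_traces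
    (ℓ : ℕ) [Fact ℓ.Prime] (n : ℕ) (hn : 1 ≤ n)
    {K : Type*} [NormedField K] [Algebra ℚ_[ℓ] K] [IsAlgClosure ℚ_[ℓ] K]
    (hnorm : ∀ q : ℚ_[ℓ], ‖algebraMap ℚ_[ℓ] K q‖ = ‖q‖)
    {G : Type*} [Group G] [TopologicalSpace G] [IsTopologicalGroup G]
    [CompactSpace G] [T2Space G] [TotallyDisconnectedSpace G]
    (ρ : G →* Matrix.GeneralLinearGroup (Fin n) K)
    (hρ : Continuous ρ)
    (H : Subgroup G) (hHopen : IsOpen (H : Set G))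
    (hint : ∀ h ∈ H, ∀ i j : Fin n, ∃ z : ℤ_[ℓ],
      (ρ h : Matrix (Fin n) (Fin n) K) i j = algebraMap ℚ_[ℓ] K (z : ℚ_[ℓ]))
    (hfull : ∃ m : ℕ, ∀ A : Matrix.GeneralLinearGroup (Fin n) K,
      (∀ i j : Fin n, ∃ z : ℤ_[ℓ],
        (A : Matrix (Fin n) (Fin n) K) i j = algebraMap ℚ_[ℓ] K (z : ℚ_[ℓ])) →
      (∀ i j : Fin n, ∃ z : ℤ_[ℓ],
        ((A : Matrix (Fin n) (Fin n) K) - 1) i j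
          = algebraMap ℚ_[ℓ] K ((ℓ : ℚ_[ℓ]) ^ m * (z : ℚ_[ℓ]))) →
      ∃ h ∈ H, ρ h = A)
    (S : Set G) (hS : Dense S)
    (htr : ∀ s ∈ S, ∃ q : ℚ_[ℓ],
      Matrix.trace (ρ s : Matrix (Fin n) (Fin n) K) = algebraMap ℚ_[ℓ] K q) :
    ∀ g : G, ∀ i j : Fin n, ∃ q : ℚ_[ℓ],
      (ρ g : Matrix (Fin n) (Fin n) K) i j = algebraMap ℚ_[ℓ] K q :=
  rational_entries_of_dense_rational_traces_general ℓ n hnorm ρ hρ H hfull S hS htr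
end
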